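/- For any graph $G$, any edge $e \in E(G)$, and any nonnegative integer $q$: $\operatorname{Z}_q(G - e) \le \operatorname{Z}_q(G) + 1$. -/

import Mathlib

open SimpleGraph

namespace ZqGame

variable {V : Type*}

/-- A blue vertex `v` forces the white vertex `w`, where only white vertices in
`Wallow` are taken into account (used for Rule 3, where play is restricted to the
subgraph induced by the blue set together with the returned white components). -/
def ForceIn (G : SimpleGraph V) (B : Set V) (Wallow : Set V) (v w : V) : Prop :=
  v ∈ B ∧ w ∉ B ∧ w ∈ Wallow ∧ G.Adj v w ∧
    ∀ u, G.Adj v u → u ∉ B → u ∈ Wallow → u = w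

/-- The standard color change rule: `v` is blue and `w` is its unique white neighbor. -/
def Force (G : SimpleGraph V) (B : Set V) (v w : V) : Prop :=
  ForceIn G B Set.univ v w

/-- The white connected component of `G - B` containing the white vertex `w`. -/
def WhiteComp (G : SimpleGraph V) (B : Set V) (w : V) : Set V :=
  {x | Relation.ReflTransGen (fun a b => G.Adj a b ∧ a ∉ B ∧ b ∉ B) w x}

/-- `W` is a white component, i.e. a connected component of `G - B`. -/
def IsWhiteComp (G : SimpleGraph V) (B : Set V) (W : Set V) : Prop :=
  ∃ w, w ∉ B ∧ W = WhiteComp G B w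

/-- An active vertex: a blue vertex with at least two white neighbors. -/
def Active (G : SimpleGraph V) (B : Set V) (a : V) : Prop :=
  a ∈ B ∧ ∃ w₁ w₂, w₁ ≠ w₂ ∧ G.Adj a w₁ ∧ G.Adj a w₂ ∧ w₁ ∉ B ∧ w₂ ∉ B

end ZqGame

namespace ZqGame

variable {V : Type*}

/-- `Win G q B t` : in the `Z_q`-forcing game on `G` starting from blue set `B`,
Blue has a strategy spending at most `t` tokens that colors every vertex blue
against any (adversarial) play by White.
* `all` : every vertex is already blue.
* `rule1` : spend one token to color an arbitrary vertex blue.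
* `rule2` : a blue vertex with exactly one white neighbor forces it, for free.
* `rule3` : Blue announces a collection `𝒲` of at least `q + 1` white components;
  for every nonempty sub-collection `𝒮` that White may return, Blue can perform a
  Rule 2 force (`vf 𝒮 → wf 𝒮`) on the subgraph induced by `B` together with `⋃ 𝒮`,
  and continue from the resulting position. -/
inductive Win (G : SimpleGraph V) (q : ℕ) : Set V → ℕ → Prop
  | all (B : Set V) (t : ℕ) : (∀ v, v ∈ B) → Win G q B t
  | rule1 (B : Set V) (t : ℕ) (v : V) : Win G q (insert v B) t → Win G q B (t + 1)
  | rule2 (B : Set V) (t : ℕ) (v w : V) :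
      Force G B v w → Win G q (insert w B) t → Win G q B t
  | rule3 (B : Set V) (t : ℕ) (𝒲 : Finset (Set V))
      (vf wf : Finset (Set V) → V) :
      (∀ W ∈ 𝒲, IsWhiteComp G B W) → q + 1 ≤ 𝒲.card →
      (∀ 𝒮 : Finset (Set V), 𝒮 ⊆ 𝒲 → 𝒮.Nonempty →
        ForceIn G B (⋃₀ (𝒮 : Set (Set V))) (vf 𝒮) (wf 𝒮)) →
      (∀ 𝒮 : Finset (Set V), 𝒮 ⊆ 𝒲 → 𝒮.Nonempty →
        Win G q (insert (wf 𝒮) B) t) →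
      Win G q B t

/-- `Z_q(G, B)` : the minimum number of additional tokens Blue must spend to win the
`Z_q`-forcing game on `G` starting from blue set `B`. -/
noncomputable def cost (G : SimpleGraph V) (q : ℕ) (B : Set V) : ℕ :=
  sInf {t | Win G q B t}

/-- `Z_q(G)` : the `Z_q`-forcing number of `G`. -/
noncomputable def Zq (G : SimpleGraph V) (q : ℕ) : ℕ := cost G q ∅

end ZqGame

/-!
Blue plays on `G - vw` by copying a winning strategy for `G`, holding one token in reserve.
The first time the strategy forces along `vw`, Blue buys the forced vertex instead; from then on
both ends of `vw` are blue and the two games coincide. Before that, every force of `G` is a force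
of `G - vw`, and deleting `vw` changes the white components only when `vw` is a white bridge,
splitting the component `W₀` of `v` into halves `Hv ∪ Hw`. If a Rule 3 move announces `W₀`, one
half `H` can be announced in its place: for every set `T` of other announced components, some
answer of the strategy to a superset of `{W₀} ∪ T` forces into `⋃ T ∪ H`, since otherwise the
answer to `{W₀} ∪ T₁ ∪ T₂` for bad witnesses `T₁`, `T₂` of the two halves would have nowhere to go.
-/

namespace ZqGame

variable {V : Type*}

section WhiteComp

variable {G G' : SimpleGraph V} {B : Set V} {v w x y : V}

instance : Std.Symm (fun a b => G.Adj a b ∧ a ∉ B ∧ b ∉ B) :=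
  ⟨fun _ _ h => ⟨h.1.symm, h.2.2, h.2.1⟩⟩

lemma mem_whiteComp_self (G : SimpleGraph V) (B : Set V) (x : V) : x ∈ WhiteComp G B x :=
  .refl

lemma mem_whiteComp_comm : y ∈ WhiteComp G B x ↔ x ∈ WhiteComp G B y :=
  ⟨Relation.ReflTransGen.stdSymm.symm _ _, Relation.ReflTransGen.stdSymm.symm _ _⟩

lemma whiteComp_eq_of_mem (h : y ∈ WhiteComp G B x) : WhiteComp G B x = WhiteComp G B y :=
  Set.ext fun _ => ⟨(mem_whiteComp_comm.mp h).trans, h.trans⟩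

lemma IsWhiteComp.eq_whiteComp_of_mem {W : Set V} (hW : IsWhiteComp G B W) (hx : x ∈ W) :
    W = WhiteComp G B x := by
  obtain ⟨y, -, rfl⟩ := hW
  exact whiteComp_eq_of_mem hx

lemma whiteComp_mono (hle : G' ≤ G) : WhiteComp G' B x ⊆ WhiteComp G B x :=
  Relation.ReflTransGen.mono (fun _ _ h => ⟨hle h.1, h.2⟩) _

lemma whiteComp_congr (h : ∀ a b, a ∉ B → b ∉ B → (G'.Adj a b ↔ G.Adj a b)) :
    WhiteComp G' B = WhiteComp G B := by
  have : (fun a b => G'.Adj a b ∧ a ∉ B ∧ b ∉ B) = (fun a b => G.Adj a b ∧ a ∉ B ∧ b ∉ B) := by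
    funext a b
    exact propext ⟨fun h' => ⟨(h a b h'.2.1 h'.2.2).mp h'.1, h'.2⟩,
      fun h' => ⟨(h a b h'.2.1 h'.2.2).mpr h'.1, h'.2⟩⟩
  unfold WhiteComp
  rw [this]

lemma deleteEdge_adj_of_ne (hab : G.Adj x y) (hne : s(x, y) ≠ s(v, w)) :
    (G.deleteEdges {s(v, w)}).Adj x y :=
  deleteEdges_adj.mpr ⟨hab, hne⟩

lemma whiteComp_deleteEdge_of_notMem (hv : v ∉ WhiteComp G B x) :
    WhiteComp (G.deleteEdges {s(v, w)}) B x = WhiteComp G B x := by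
  refine (whiteComp_mono (deleteEdges_le _)).antisymm fun y hy => ?_
  induction hy with
  | refl => exact .refl
  | @tail b c hb hbc ih =>
    refine ih.tail ⟨deleteEdge_adj_of_ne hbc.1 fun hs => hv ?_, hbc.2⟩
    rcases Sym2.eq_iff.mp hs with ⟨rfl, -⟩ | ⟨-, rfl⟩
    exacts [hb, hb.tail hbc]

lemma whiteComp_deleteEdge_eq (h : v ∉ B → w ∉ B → w ∈ WhiteComp (G.deleteEdges {s(v, w)}) B v) :
    WhiteComp (G.deleteEdges {s(v, w)}) B = WhiteComp G B := by
  funext x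
  refine (whiteComp_mono (deleteEdges_le _)).antisymm fun y hy => ?_
  induction hy with
  | refl => exact .refl
  | @tail b c _ hbc ih =>
    refine ih.trans ?_
    by_cases hs : s(b, c) = s(v, w)
    · rcases Sym2.eq_iff.mp hs with ⟨rfl, rfl⟩ | ⟨rfl, rfl⟩
      exacts [h hbc.2.1 hbc.2.2, mem_whiteComp_comm.mp (h hbc.2.2 hbc.2.1)]
    · exact .single ⟨deleteEdge_adj_of_ne hbc.1 hs, hbc.2⟩

lemma whiteComp_eq_union_deleteEdge (he : G.Adj v w) (hv : v ∉ B) (hw : w ∉ B) :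
    WhiteComp G B v =
      WhiteComp (G.deleteEdges {s(v, w)}) B v ∪ WhiteComp (G.deleteEdges {s(v, w)}) B w := by
  refine subset_antisymm (fun y hy => ?_) (Set.union_subset (whiteComp_mono (deleteEdges_le _))
    fun y hy => Relation.ReflTransGen.head ⟨he, hv, hw⟩ (whiteComp_mono (deleteEdges_le _) hy))
  induction hy with
  | refl => exact .inl (mem_whiteComp_self _ _ _)
  | @tail b c _ hbc ih =>
    by_cases hs : s(b, c) = s(v, w)
    · rcases Sym2.eq_iff.mp hs with ⟨rfl, rfl⟩ | ⟨rfl, rfl⟩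
      exacts [.inr (mem_whiteComp_self _ _ _), .inl (mem_whiteComp_self _ _ _)]
    · have hstep := (⟨deleteEdge_adj_of_ne hbc.1 hs, hbc.2⟩ :
        (G.deleteEdges {s(v, w)}).Adj b c ∧ b ∉ B ∧ c ∉ B)
      exact ih.imp (·.tail hstep) (·.tail hstep)

lemma IsWhiteComp.deleteEdge_or {W : Set V} (hW : IsWhiteComp G B W) :
    IsWhiteComp (G.deleteEdges {s(v, w)}) B W ∨
      v ∉ B ∧ w ∉ B ∧ w ∉ WhiteComp (G.deleteEdges {s(v, w)}) B v ∧ W = WhiteComp G B v := by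
  obtain ⟨x, hx, rfl⟩ := hW
  by_cases hvx : v ∈ WhiteComp G B x
  · by_cases hbridge : v ∉ B ∧ w ∉ B ∧ w ∉ WhiteComp (G.deleteEdges {s(v, w)}) B v
    · exact .inr ⟨hbridge.1, hbridge.2.1, hbridge.2.2, whiteComp_eq_of_mem hvx⟩
    · refine .inl ⟨x, hx, ?_⟩
      rw [whiteComp_deleteEdge_eq fun hv hw => not_not.mp fun h => hbridge ⟨hv, hw, h⟩]
  · exact .inl ⟨x, hx, (whiteComp_deleteEdge_of_notMem hvx).symm⟩

end WhiteComp

section Refinement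

variable {α : Type*} [DecidableEq (Set α)] {𝒲 : Finset (Set α)} {W₀ H₁ H₂ : Set α}
  {f : Finset (Set α) → α}

lemma exists_half_forall_exists_superset (hW₀ : W₀ ∈ 𝒲) (hsplit : W₀ = H₁ ∪ H₂)
    (hf : ∀ 𝒮 ⊆ 𝒲, 𝒮.Nonempty → f 𝒮 ∈ ⋃₀ (𝒮 : Set (Set α))) :
    ∃ H, (H = H₁ ∨ H = H₂) ∧
      ∀ T ⊆ 𝒲, ∃ 𝒮 ⊆ 𝒲, insert W₀ T ⊆ 𝒮 ∧ f 𝒮 ∈ ⋃₀ (T : Set (Set α)) ∪ H := by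
  subst hsplit
  by_contra! hbad
  obtain ⟨T₁, hT₁, hbad₁⟩ := hbad H₁ (.inl rfl)
  obtain ⟨T₂, hT₂, hbad₂⟩ := hbad H₂ (.inr rfl)
  have hsub : insert (H₁ ∪ H₂) (T₁ ∪ T₂) ⊆ 𝒲 :=
    Finset.insert_subset hW₀ (Finset.union_subset hT₁ hT₂)
  have hmem := hf _ hsub (Finset.insert_nonempty _ _)
  have h₁ := hbad₁ _ hsub (Finset.insert_subset_insert _ Finset.subset_union_left)
  have h₂ := hbad₂ _ hsub (Finset.insert_subset_insert _ Finset.subset_union_right)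
  rw [Finset.coe_insert, Set.sUnion_insert, Finset.coe_union, Set.sUnion_union] at hmem
  rcases hmem with (h | h) | h | h
  exacts [h₁ (.inr h), h₂ (.inr h), h₁ (.inl h), h₂ (.inl h)]

lemma exists_half_refining (hW₀ : W₀ ∈ 𝒲) (hsplit : W₀ = H₁ ∪ H₂)
    (hf : ∀ 𝒮 ⊆ 𝒲, 𝒮.Nonempty → f 𝒮 ∈ ⋃₀ (𝒮 : Set (Set α))) :
    ∃ H, (H = H₁ ∨ H = H₂) ∧ ∀ 𝒮' ⊆ insert H (𝒲.erase W₀), 𝒮'.Nonempty →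
      ∃ 𝒮 ⊆ 𝒲, 𝒮.Nonempty ∧ ⋃₀ (𝒮' : Set (Set α)) ⊆ ⋃₀ (𝒮 : Set (Set α)) ∧
        f 𝒮 ∈ ⋃₀ (𝒮' : Set (Set α)) := by
  obtain ⟨H, hH, hgood⟩ := exists_half_forall_exists_superset hW₀ hsplit hf
  refine ⟨H, hH, fun 𝒮' h𝒮' hne => ?_⟩
  by_cases hH𝒮' : H ∈ 𝒮'
  · have hT : 𝒮'.erase H ⊆ 𝒲 := fun W hW => by
      have := h𝒮' (Finset.mem_of_mem_erase hW)
      rw [Finset.mem_insert, or_iff_right (Finset.ne_of_mem_erase hW)] at this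
      exact Finset.mem_of_mem_erase this
    have hunion : ⋃₀ (𝒮' : Set (Set α)) = H ∪ ⋃₀ ((𝒮'.erase H : Finset _) : Set (Set α)) := by
      conv_lhs => rw [← Finset.insert_erase hH𝒮']
      rw [Finset.coe_insert, Set.sUnion_insert]
    obtain ⟨𝒮, h𝒮, hW₀T, hf𝒮⟩ := hgood _ hT
    have hH : H ⊆ ⋃₀ (𝒮 : Set (Set α)) := by
      refine subset_trans ?_ (Set.subset_sUnion_of_mem (Finset.mem_coe.mpr
        (hW₀T (Finset.mem_insert_self _ _))))
      rcases hH with rfl | rfl <;> simp [hsplit]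
    refine ⟨𝒮, h𝒮, ⟨W₀, hW₀T (Finset.mem_insert_self _ _)⟩, ?_, ?_⟩
    · rw [hunion]
      exact Set.union_subset hH (Set.sUnion_subset_sUnion fun W hW =>
        hW₀T (Finset.mem_insert_of_mem hW))
    · rw [hunion, Set.union_comm]
      exact hf𝒮
  · have h𝒮'𝒲 : 𝒮' ⊆ 𝒲 := fun W hW => by
      have := h𝒮' hW
      rw [Finset.mem_insert, or_iff_right (ne_of_mem_of_not_mem hW hH𝒮')] at this
      exact Finset.mem_of_mem_erase this
    exact ⟨𝒮', h𝒮'𝒲, hne, subset_rfl, hf 𝒮' h𝒮'𝒲 hne⟩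

end Refinement

section Win

variable {G G' : SimpleGraph V} {q t : ℕ} {B : Set V} {v w : V}

lemma ForceIn.mono {W W' : Set V} {a b : V} (hf : ForceIn G B W a b) (hle : G' ≤ G)
    (hadj : G'.Adj a b) (hW' : W' ⊆ W) (hb : b ∈ W') : ForceIn G' B W' a b :=
  ⟨hf.1, hf.2.1, hb, hadj, fun u hu hu' huW => hf.2.2.2.2 u (hle hu) hu' (hW' huW)⟩

theorem Win.of_le (h : Win G q B t) (hle : G' ≤ G)
    (hB : ∀ ⦃a b⦄, G.Adj a b → b ∉ B → G'.Adj a b) : Win G' q B t := by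
  induction h with
  | all B t h => exact .all B t h
  | rule1 B t x _ ih => exact .rule1 B t x (ih fun a b hab hb => hB hab (hb ∘ .inr))
  | rule2 B t a b hf _ ih =>
    exact .rule2 B t a b (hf.mono hle (hB hf.2.2.2.1 hf.2.1) subset_rfl hf.2.2.1)
      (ih fun a b hab hb => hB hab (hb ∘ .inr))
  | rule3 B t 𝒲 vf wf hcomp hcard hforce _ ih =>
    have hcongr : WhiteComp G' B = WhiteComp G B :=
      whiteComp_congr fun a b _ hb => ⟨(hle ·), (hB · hb)⟩
    refine .rule3 B t 𝒲 vf wf (fun W hW => ?_) hcard (fun 𝒮 h𝒮 hne => ?_)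
      fun 𝒮 h𝒮 hne => ih 𝒮 h𝒮 hne fun a b hab hb => hB hab (hb ∘ .inr)
    · simpa only [IsWhiteComp, hcongr] using hcomp W hW
    · have hf := hforce 𝒮 h𝒮 hne
      exact hf.mono hle (hB hf.2.2.2.1 hf.2.1) subset_rfl hf.2.2.1

theorem Win.deleteEdge_of_mem (h : Win G q B t) (hv : v ∈ B) (hw : w ∈ B) :
    Win (G.deleteEdges {s(v, w)}) q B t :=
  h.of_le (deleteEdges_le _) fun a b hab hb => deleteEdge_adj_of_ne hab fun hs => hb <| by
    rcases Sym2.eq_iff.mp hs with ⟨-, rfl⟩ | ⟨-, rfl⟩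
    exacts [hw, hv]

theorem ForceIn.win_deleteEdge_of_not_adj {W : Set V} {a b : V} (hf : ForceIn G B W a b)
    (hadj : ¬(G.deleteEdges {s(v, w)}).Adj a b) (h : Win G q (insert b B) t) :
    Win (G.deleteEdges {s(v, w)}) q B (t + 1) := by
  have hs : s(a, b) = s(v, w) := not_not.mp fun hs => hadj (deleteEdge_adj_of_ne hf.2.2.2.1 hs)
  have ha : a ∈ insert b B := .inr hf.1
  have hb : b ∈ insert b B := .inl rfl
  refine .rule1 B t b (h.deleteEdge_of_mem ?_ ?_) <;>
    rcases Sym2.eq_iff.mp hs with ⟨rfl, rfl⟩ | ⟨rfl, rfl⟩ <;> assumption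

theorem win_rule3_of_refining {𝒲 𝒲' : Finset (Set V)} {vf wf : Finset (Set V) → V}
    (hle : G' ≤ G)
    (hforce : ∀ 𝒮 ⊆ 𝒲, 𝒮.Nonempty → ForceIn G B (⋃₀ (𝒮 : Set (Set V))) (vf 𝒮) (wf 𝒮))
    (hadj : ∀ 𝒮 ⊆ 𝒲, 𝒮.Nonempty → G'.Adj (vf 𝒮) (wf 𝒮))
    (hwin : ∀ 𝒮 ⊆ 𝒲, 𝒮.Nonempty → Win G' q (insert (wf 𝒮) B) t)
    (hcomp' : ∀ W ∈ 𝒲', IsWhiteComp G' B W) (hcard' : q + 1 ≤ 𝒲'.card)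
    (hrefine : ∀ 𝒮' ⊆ 𝒲', 𝒮'.Nonempty → ∃ 𝒮 ⊆ 𝒲, 𝒮.Nonempty ∧
      ⋃₀ (𝒮' : Set (Set V)) ⊆ ⋃₀ (𝒮 : Set (Set V)) ∧ wf 𝒮 ∈ ⋃₀ (𝒮' : Set (Set V))) :
    Win G' q B t := by
  choose! 𝒮f h𝒮f hne hsub hmem using hrefine
  exact .rule3 B t 𝒲' (vf ∘ 𝒮f) (wf ∘ 𝒮f) hcomp' hcard'
    (fun 𝒮' h h' => (hforce _ (h𝒮f 𝒮' h h') (hne 𝒮' h h')).mono hle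
      (hadj _ (h𝒮f 𝒮' h h') (hne 𝒮' h h')) (hsub 𝒮' h h') (hmem 𝒮' h h'))
    fun 𝒮' h h' => hwin _ (h𝒮f 𝒮' h h') (hne 𝒮' h h')

theorem win_deleteEdge_of_rule3 (he : G.Adj v w) {𝒲 : Finset (Set V)}
    {vf wf : Finset (Set V) → V} (hcomp : ∀ W ∈ 𝒲, IsWhiteComp G B W) (hcard : q + 1 ≤ 𝒲.card)
    (hforce : ∀ 𝒮 ⊆ 𝒲, 𝒮.Nonempty → ForceIn G B (⋃₀ (𝒮 : Set (Set V))) (vf 𝒮) (wf 𝒮))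
    (hadj : ∀ 𝒮 ⊆ 𝒲, 𝒮.Nonempty → (G.deleteEdges {s(v, w)}).Adj (vf 𝒮) (wf 𝒮))
    (hwin : ∀ 𝒮 ⊆ 𝒲, 𝒮.Nonempty → Win (G.deleteEdges {s(v, w)}) q (insert (wf 𝒮) B) t) :
    Win (G.deleteEdges {s(v, w)}) q B t := by
  classical
  have hrule3 := fun 𝒲' => win_rule3_of_refining (𝒲' := 𝒲') (deleteEdges_le _) hforce hadj hwin
  by_cases hsplit : v ∉ B ∧ w ∉ B ∧ w ∉ WhiteComp (G.deleteEdges {s(v, w)}) B v ∧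
      WhiteComp G B v ∈ 𝒲
  · obtain ⟨hv, hw, -, hW₀⟩ := hsplit
    have hunion := whiteComp_eq_union_deleteEdge he hv hw
    obtain ⟨H, hH, hrefine⟩ :=
      exists_half_refining hW₀ hunion fun 𝒮 h𝒮 hne => (hforce 𝒮 h𝒮 hne).2.2.1
    obtain ⟨x, hxH, hxW₀⟩ : ∃ x ∈ H, x ∈ WhiteComp G B v := by
      rcases hH with rfl | rfl
      exacts [⟨v, mem_whiteComp_self .., hunion ▸ .inl (mem_whiteComp_self ..)⟩,
        ⟨w, mem_whiteComp_self .., hunion ▸ .inr (mem_whiteComp_self ..)⟩]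
    have hHnot : H ∉ 𝒲.erase (WhiteComp G B v) := fun hmem =>
      Finset.ne_of_mem_erase hmem <| ((hcomp H (Finset.mem_of_mem_erase hmem)).eq_whiteComp_of_mem
        hxH).trans (whiteComp_eq_of_mem hxW₀).symm
    refine hrule3 (insert H (𝒲.erase _)) (fun W hW => ?_) ?_ hrefine
    · rcases Finset.mem_insert.mp hW with rfl | hW
      · rcases hH with rfl | rfl
        exacts [⟨v, hv, rfl⟩, ⟨w, hw, rfl⟩]
      · exact (hcomp W (Finset.mem_of_mem_erase hW)).deleteEdge_or.resolve_right
          fun h => Finset.ne_of_mem_erase hW h.2.2.2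
    · rwa [Finset.card_insert_of_notMem hHnot, Finset.card_erase_add_one hW₀]
  · refine hrule3 𝒲 (fun W hW => (hcomp W hW).deleteEdge_or.resolve_right fun h =>
      hsplit ⟨h.1, h.2.1, h.2.2.1, h.2.2.2 ▸ hW⟩) hcard
      fun 𝒮 h𝒮 hne => ⟨𝒮, h𝒮, hne, subset_rfl, (hforce 𝒮 h𝒮 hne).2.2.1⟩

theorem Win.deleteEdge (h : Win G q B t) (he : G.Adj v w) :
    Win (G.deleteEdges {s(v, w)}) q B (t + 1) := by
  induction h with
  | all B t h => exact .all B _ h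
  | rule1 B t x _ ih => exact .rule1 B _ x ih
  | rule2 B t a b hf h ih =>
    by_cases hadj : (G.deleteEdges {s(v, w)}).Adj a b
    · exact .rule2 B _ a b (hf.mono (deleteEdges_le _) hadj subset_rfl trivial) ih
    · exact hf.win_deleteEdge_of_not_adj hadj h
  | rule3 B t 𝒲 vf wf hcomp hcard hforce hwin ih =>
    by_cases hadj : ∀ 𝒮 ⊆ 𝒲, 𝒮.Nonempty → (G.deleteEdges {s(v, w)}).Adj (vf 𝒮) (wf 𝒮)
    · exact win_deleteEdge_of_rule3 he hcomp hcard hforce hadj ih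
    · push Not at hadj
      obtain ⟨𝒮, h𝒮, hne, hadj⟩ := hadj
      exact (hforce 𝒮 h𝒮 hne).win_deleteEdge_of_not_adj hadj (hwin 𝒮 h𝒮 hne)

theorem Win.finite_compl (h : Win G q B t) : Bᶜ.Finite := by
  have of_insert {C : Set V} (x : V) (hx : (insert x C)ᶜ.Finite) : Cᶜ.Finite :=
    (hx.insert x).subset fun y hy => by by_cases hyx : y = x <;> simp_all
  induction h with
  | all B t h => simp [Set.compl_empty_iff.mpr (Set.eq_univ_of_forall h)]
  | rule1 B t x _ ih => exact of_insert x ih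
  | rule2 B t a b _ _ ih => exact of_insert b ih
  | rule3 B t 𝒲 vf wf _ hcard _ _ ih =>
    obtain ⟨W, hW⟩ := Finset.card_pos.mp (Nat.lt_of_lt_of_le q.succ_pos hcard)
    exact of_insert _ (ih {W} (Finset.singleton_subset_iff.mpr hW) (Finset.singleton_nonempty W))

theorem win_card_of_compl_subset (G : SimpleGraph V) (q : ℕ) (s : Finset V) (hB : Bᶜ ⊆ s) :
    Win G q B s.card := by
  classical
  induction s using Finset.induction_on generalizing B with
  | empty => exact .all B 0 fun x => by simpa using @hB x
  | insert a s ha ih =>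
    rw [Finset.card_insert_of_notMem ha]
    refine .rule1 B _ a (ih fun x hx => ?_)
    have := hB fun h => hx (.inr h)
    simp_all

end Win

end ZqGame

open SimpleGraph

/-- Edge deletion can increase `Z_q` by at most `1`:
for any edge `vw` of `G`, `Z_q(G - vw) ≤ Z_q(G) + 1`. -/
theorem Zq_deleteEdge_le_Zq_add_one {V : Type*} (G : SimpleGraph V) (v w : V)
    (he : G.Adj v w) (q : ℕ) :
    ZqGame.Zq (G.deleteEdges {s(v, w)}) q ≤ ZqGame.Zq G q + 1 := by
  by_cases hG : ∃ t, ZqGame.Win G q ∅ t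
  · exact Nat.sInf_le ((Nat.sInf_mem hG).deleteEdge he)
  · -- `Zq` is `sInf ∅ = 0` for an unwinnable game, and a win on `G - vw` would force `V` to be
    -- finite, where `G` is won by buying every vertex.
    have hG' : ∀ t, ¬ZqGame.Win (G.deleteEdges {s(v, w)}) q ∅ t := fun t ht =>
      hG ⟨_, ZqGame.win_card_of_compl_subset G q ht.finite_compl.toFinset (by simp)⟩
    simp [ZqGame.Zq, ZqGame.cost, hG']
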